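/- arXiv:2605.17599 — 6 statements merged into one kernel-verified Lean document; each statement's English description precedes it below -/
import Mathlib

section
/- Fix ẑ ∈ ℝ^m, let A(ẑ) ∈ GL(n,ℝ), b(ẑ) ∈ ℝ^n, τ_R > 0, τ_ψ > 0, and let F : ℝ^m × ℝ^n → ℝ be C¹ with L_F-Lipschitz gradient (‖∇F(w₁) − ∇F(w₂)‖₂ ≤ L_F‖w₁ − w₂‖₂ for all w₁, w₂). Let y*_ẑ = A(ẑ)⁻¹b(ẑ), 𝒴_ẑ = { y : ‖A(ẑ)y − b(ẑ)‖₂ ≤ τ_R }, C_R(ẑ) = ‖A(ẑ)⁻¹‖₂. For y ∈ ℝ^n, let ψ*_{ẑ,y} be the unique solution of A(ẑ)ᵀψ = ∇_y F(ẑ,y), and let 𝒜_{ẑ,y} = { ψ ∈ ℝ^n : ‖A(ẑ)ᵀψ − ∇_y F(ẑ,y)‖₂ ≤ τ_ψ }. Then for every y ∈ 𝒴_ẑ and every ψ ∈ 𝒜_{ẑ,y}, ‖ψ − ψ*_{ẑ,y*_ẑ}‖₂ ≤ C_R(ẑ)² · L_F · τ_R + C_R(ẑ) · τ_ψ. -/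
noncomputable def gradYF {m n : ℕ}
    (F : WithLp 2 (EuclideanSpace ℝ (Fin m) × EuclideanSpace ℝ (Fin n)) → ℝ)
    (z : EuclideanSpace ℝ (Fin m)) (y : EuclideanSpace ℝ (Fin n)) :
    EuclideanSpace ℝ (Fin n) :=
  gradient (fun y' => F ((WithLp.equiv 2 _).symm (z, y'))) y

/-! Since `(Aᵀ)⁻¹ = (A⁻¹)ᵀ` has norm `C_R`, `‖ψ - ψ*‖ ≤ C_R ‖Aᵀψ - Aᵀψ*‖`, and by the triangle
inequality `‖Aᵀψ - Aᵀψ*‖ ≤ τ_ψ + ‖∇_y F(ẑ, y) - ∇_y F(ẑ, y*)‖`. The partial gradient is the second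
component of the full gradient in the `L²` product, so it inherits the Lipschitz constant `L_F`,
and `‖y - y*‖ = ‖A⁻¹(Ay - b)‖ ≤ C_R τ_R`. -/

open WithLp ContinuousLinearMap

lemma nonneg_of_forall_norm_sub_le_mul {E F : Type*} [NormedAddCommGroup E] [Nontrivial E]
    [SeminormedAddCommGroup F] {f : E → F} {L : ℝ} (hf : ∀ x y, ‖f x - f y‖ ≤ L * ‖x - y‖) :
    0 ≤ L := by
  obtain ⟨x, hx⟩ := exists_ne (0 : E)
  have h := (norm_nonneg _).trans (hf x 0)
  rw [sub_zero] at h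
  exact nonneg_of_mul_nonneg_left h (norm_pos_iff.mpr hx)

lemma norm_sub_symm_apply_le {𝕜 E F : Type*} [NontriviallyNormedField 𝕜] [SeminormedAddCommGroup E]
    [NormedSpace 𝕜 E] [SeminormedAddCommGroup F] [NormedSpace 𝕜 F] (A : E ≃L[𝕜] F) (y : E) (b : F) :
    ‖y - A.symm b‖ ≤ ‖(A.symm : F →L[𝕜] E)‖ * ‖A y - b‖ := by
  simpa using (A.symm : F →L[𝕜] E).le_opNorm (A y - b)

section Adjoint

variable {𝕜 H K : Type*} [RCLike 𝕜] [NormedAddCommGroup H] [InnerProductSpace 𝕜 H]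
  [CompleteSpace H] [NormedAddCommGroup K] [InnerProductSpace 𝕜 K] [CompleteSpace K]

lemma adjoint_symm_apply_adjoint (A : H ≃L[𝕜] K) (x : K) :
    adjoint (A.symm : K →L[𝕜] H) (adjoint (A : H →L[𝕜] K) x) = x := by
  rw [← comp_apply, ← adjoint_comp, A.coe_comp_coe_symm, adjoint_id, id_apply]

lemma norm_sub_le_norm_symm_mul_norm_adjoint_sub (A : H ≃L[𝕜] K) (x x' : K) :
    ‖x - x'‖ ≤
      ‖(A.symm : K →L[𝕜] H)‖ * ‖adjoint (A : H →L[𝕜] K) x - adjoint (A : H →L[𝕜] K) x'‖ := by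
  calc ‖x - x'‖
      = ‖adjoint (A.symm : K →L[𝕜] H) (adjoint (A : H →L[𝕜] K) x - adjoint (A : H →L[𝕜] K) x')‖ := by
        rw [map_sub, adjoint_symm_apply_adjoint, adjoint_symm_apply_adjoint]
    _ ≤ _ := by
        rw [← LinearIsometryEquiv.norm_map adjoint (A.symm : K →L[𝕜] H)]
        exact le_opNorm _ _

theorem norm_sub_le_of_inexact_state_adjoint (A : H ≃L[𝕜] K) {g : H → H} {L : ℝ}
    (hg : ∀ y y', ‖g y - g y'‖ ≤ L * ‖y - y'‖) {b : K} {y : H} {ψ ψstar : K} {τR τψ : ℝ}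
    (hy : ‖A y - b‖ ≤ τR) (hψ : ‖adjoint (A : H →L[𝕜] K) ψ - g y‖ ≤ τψ)
    (hψstar : adjoint (A : H →L[𝕜] K) ψstar = g (A.symm b)) :
    ‖ψ - ψstar‖ ≤ ‖(A.symm : K →L[𝕜] H)‖ ^ 2 * L * τR + ‖(A.symm : K →L[𝕜] H)‖ * τψ := by
  set C := ‖(A.symm : K →L[𝕜] H)‖
  have hstate : L * ‖y - A.symm b‖ ≤ L * (C * τR) := by
    -- `L` can only be negative when `H` is trivial, and then `C = 0`.
    rcases subsingleton_or_nontrivial H with hH | hH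
    · have hC : C = 0 := by simp [C, Subsingleton.elim (A.symm : K →L[𝕜] H) 0]
      simp [Subsingleton.elim y (A.symm b), hC]
    · exact mul_le_mul_of_nonneg_left ((norm_sub_symm_apply_le A y b).trans
        (mul_le_mul_of_nonneg_left hy (norm_nonneg _)))
        (nonneg_of_forall_norm_sub_le_mul hg)
  have hadjoint :
      ‖adjoint (A : H →L[𝕜] K) ψ - adjoint (A : H →L[𝕜] K) ψstar‖ ≤ τψ + L * (C * τR) :=
    calc _ = ‖(adjoint (A : H →L[𝕜] K) ψ - g y) + (g y - g (A.symm b))‖ := by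
          rw [hψstar, sub_add_sub_cancel]
      _ ≤ τψ + L * (C * τR) := (norm_add_le _ _).trans (add_le_add hψ ((hg _ _).trans hstate))
  calc ‖ψ - ψstar‖ ≤ C * (τψ + L * (C * τR)) :=
        (norm_sub_le_norm_symm_mul_norm_adjoint_sub A ψ ψstar).trans
          (mul_le_mul_of_nonneg_left hadjoint (norm_nonneg _))
    _ = C ^ 2 * L * τR + C * τψ := by ring

end Adjoint

lemma hasFDerivAt_toLp_prodMk_right {𝕜 E G : Type*} [NontriviallyNormedField 𝕜]
    [NormedAddCommGroup E] [NormedSpace 𝕜 E] [NormedAddCommGroup G] [NormedSpace 𝕜 G]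
    (p : ENNReal) [Fact (1 ≤ p)] (z : E) (y : G) :
    HasFDerivAt (fun y' : G => toLp p (z, y'))
      ((prodContinuousLinearEquiv p 𝕜 E G).symm.toContinuousLinearMap.comp (inr 𝕜 E G)) y :=
  (prodContinuousLinearEquiv p 𝕜 E G).symm.hasFDerivAt.comp y (hasFDerivAt_prodMk_right z y)

section PartialGradient

variable {E G : Type*} [NormedAddCommGroup E] [InnerProductSpace ℝ E] [CompleteSpace E]
  [NormedAddCommGroup G] [InnerProductSpace ℝ G] [CompleteSpace G]

theorem hasGradientAt_comp_toLp_prodMk_right {F : WithLp 2 (E × G) → ℝ} {z : E} {y : G}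
    (hF : DifferentiableAt ℝ F (toLp 2 (z, y))) :
    HasGradientAt (fun y' => F (toLp 2 (z, y'))) (gradient F (toLp 2 (z, y))).snd y := by
  rw [hasGradientAt_iff_hasFDerivAt]
  refine (hF.hasGradientAt.hasFDerivAt.comp y (hasFDerivAt_toLp_prodMk_right 2 z y)).congr_fderiv ?_
  ext v
  simp [← inner_gradient_left, prod_inner_apply]

theorem norm_gradient_comp_toLp_prodMk_right_sub_le {F : WithLp 2 (E × G) → ℝ}
    (hF : Differentiable ℝ F) {L : ℝ} (hL : ∀ w₁ w₂, ‖gradient F w₁ - gradient F w₂‖ ≤ L * ‖w₁ - w₂‖)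
    (z : E) (y y' : G) :
    ‖gradient (fun u => F (toLp 2 (z, u))) y - gradient (fun u => F (toLp 2 (z, u))) y'‖
      ≤ L * ‖y - y'‖ := by
  rw [(hasGradientAt_comp_toLp_prodMk_right (hF _)).gradient,
    (hasGradientAt_comp_toLp_prodMk_right (hF _)).gradient]
  calc _ = ‖(gradient F (toLp 2 (z, y)) - gradient F (toLp 2 (z, y'))).snd‖ := rfl
    _ ≤ ‖gradient F (toLp 2 (z, y)) - gradient F (toLp 2 (z, y'))‖ := WithLp.norm_snd_le _ _
    _ ≤ L * ‖toLp 2 (z, y) - toLp 2 (z, y')‖ := hL _ _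
    _ = L * ‖y - y'‖ := by rw [← toLp_sub, Prod.mk_sub_mk, sub_self, norm_toLp_snd]

end PartialGradient

theorem stmt3_general {m n : ℕ} (zhat : EuclideanSpace ℝ (Fin m))
    (A : EuclideanSpace ℝ (Fin n) ≃L[ℝ] EuclideanSpace ℝ (Fin n))
    (b : EuclideanSpace ℝ (Fin n)) (τR τψ : ℝ)
    (F : WithLp 2 (EuclideanSpace ℝ (Fin m) × EuclideanSpace ℝ (Fin n)) → ℝ)
    (hF : ContDiff ℝ 1 F) (LF : ℝ)
    (hLF : ∀ w₁ w₂, ‖gradient F w₁ - gradient F w₂‖ ≤ LF * ‖w₁ - w₂‖)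
    -- the exact state and the exact adjoint associated with it
    (ystar : EuclideanSpace ℝ (Fin n)) (hystar : ystar = A.symm b)
    (ψstar : EuclideanSpace ℝ (Fin n))
    (hψstar : ContinuousLinearMap.adjoint
        (A : EuclideanSpace ℝ (Fin n) →L[ℝ] EuclideanSpace ℝ (Fin n)) ψstar
      = gradYF F zhat ystar) :
    ∀ y ∈ {y : EuclideanSpace ℝ (Fin n) | ‖A y - b‖ ≤ τR},
      ∀ ψ ∈ {ψ : EuclideanSpace ℝ (Fin n) |
          ‖ContinuousLinearMap.adjoint
              (A : EuclideanSpace ℝ (Fin n) →L[ℝ] EuclideanSpace ℝ (Fin n)) ψ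
            - gradYF F zhat y‖ ≤ τψ},
        ‖ψ - ψstar‖ ≤
          ‖(A.symm : EuclideanSpace ℝ (Fin n) →L[ℝ] EuclideanSpace ℝ (Fin n))‖ ^ 2 * LF * τR
          + ‖(A.symm : EuclideanSpace ℝ (Fin n) →L[ℝ] EuclideanSpace ℝ (Fin n))‖ * τψ := by
  intro y hy ψ hψ
  subst hystar
  have hgrad : ∀ y y', ‖gradYF F zhat y - gradYF F zhat y'‖ ≤ LF * ‖y - y'‖ :=
    norm_gradient_comp_toLp_prodMk_right_sub_le (hF.differentiable one_ne_zero) hLF zhat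
  exact norm_sub_le_of_inexact_state_adjoint A hgrad hy hψ hψstar

theorem stmt3 {m n : ℕ} (zhat : EuclideanSpace ℝ (Fin m))
    (A : EuclideanSpace ℝ (Fin n) ≃L[ℝ] EuclideanSpace ℝ (Fin n))
    (b : EuclideanSpace ℝ (Fin n)) (τR τψ : ℝ) (hτR : 0 < τR) (hτψ : 0 < τψ)
    (F : WithLp 2 (EuclideanSpace ℝ (Fin m) × EuclideanSpace ℝ (Fin n)) → ℝ)
    (hF : ContDiff ℝ 1 F) (LF : ℝ)
    (hLF : ∀ w₁ w₂, ‖gradient F w₁ - gradient F w₂‖ ≤ LF * ‖w₁ - w₂‖)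
    -- the exact state and the exact adjoint associated with it
    (ystar : EuclideanSpace ℝ (Fin n)) (hystar : ystar = A.symm b)
    (ψstar : EuclideanSpace ℝ (Fin n))
    (hψstar : ContinuousLinearMap.adjoint
        (A : EuclideanSpace ℝ (Fin n) →L[ℝ] EuclideanSpace ℝ (Fin n)) ψstar
      = gradYF F zhat ystar) :
    ∀ y ∈ {y : EuclideanSpace ℝ (Fin n) | ‖A y - b‖ ≤ τR},
      ∀ ψ ∈ {ψ : EuclideanSpace ℝ (Fin n) |
          ‖ContinuousLinearMap.adjoint
              (A : EuclideanSpace ℝ (Fin n) →L[ℝ] EuclideanSpace ℝ (Fin n)) ψ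
            - gradYF F zhat y‖ ≤ τψ},
        ‖ψ - ψstar‖ ≤
          ‖(A.symm : EuclideanSpace ℝ (Fin n) →L[ℝ] EuclideanSpace ℝ (Fin n))‖ ^ 2 * LF * τR
          + ‖(A.symm : EuclideanSpace ℝ (Fin n) →L[ℝ] EuclideanSpace ℝ (Fin n))‖ * τψ :=
  stmt3_general zhat A b τR τψ F hF LF hLF ystar hystar ψstar hψstar
end

section
/- Fix ẑ ∈ ℝ^m and tolerances τ_R > 0, τ_ψ > 0. Let A : ℝ^m → GL(n,ℝ) and b : ℝ^m → ℝ^n be C¹ with: (i) ‖∂A/∂z_k|_z‖₂ ≤ C_A for all z and k; (ii) ‖∂b/∂z|_z‖₂ ≤ C_b for all z; and let F : ℝ^m × ℝ^n → ℝ be C¹ and L_F-smooth. Define R(z,y) = A(z)y − b(z), ∂R/∂z|_(z,y) = (∂A/∂z|_z)y − ∂b/∂z|_z, the exact state y*_ẑ = A(ẑ)⁻¹b(ẑ), C_R(ẑ) = ‖A(ẑ)⁻¹‖₂, 𝒴_ẑ = { y : ‖A(ẑ)y − b(ẑ)‖₂ ≤ τ_R }, C_{𝒴_ẑ} = sup_{y∈𝒴_ẑ}‖y‖₂,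 M_F(ẑ) = sup_{y∈𝒴_ẑ}‖∇_y F(ẑ,y)‖₂, the exact adjoint ψ*_{ẑ,y*_ẑ} solving A(ẑ)ᵀψ = ∇_y F(ẑ,y*_ẑ), the admissible adjoint set 𝒜_{ẑ,y} = { ψ : ‖A(ẑ)ᵀψ − ∇_y F(ẑ,y)‖₂ ≤ τ_ψ }, the inexact adjoint gradient ∇̄F̃(ẑ) = ∇_z F(ẑ,y) − [∂R/∂z|_(ẑ,y)]ᵀψ for y ∈ 𝒴_ẑ and ψ ∈ 𝒜_{ẑ,y}, and the exact adjoint gradient ∇F̃(ẑ) = ∇_z F(ẑ,y*_ẑ) − [∂R/∂z|_(ẑ,y*_ẑ)]ᵀψ*_{ẑ,y*_ẑ}. Then for every y ∈ 𝒴_ẑ and every ψ ∈ 𝒜_{ẑ,y}, ‖∇̄F̃(ẑ) − ∇F̃(ẑ)‖₂ ≤ D_R(ẑ)·τ_R + D_ψ(ẑ)·τ_ψ, where D_R(ẑ) = L_F·C_R(ẑ) + L_F·(√m·C_A·C_{𝒴_ẑ} + C_b)·C_R(ẑ)² + √m·C_A·M_F(ẑ)·C_R(ẑ)² and D_ψ(ẑ)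 = (√m·C_A·C_{𝒴_ẑ} + C_b)·C_R(ẑ). -/
/-!
Write `e = y - y*`. Since `y - y* = A⁻¹ (A y - b)`, the state residual gives `‖e‖ ≤ C_R τ_R`.
The adjoint error satisfies `Aᵀ (ψ - ψ*) = (Aᵀ ψ - ∇_y F(y)) + (∇_y F(y) - ∇_y F(y*))`, so
`‖ψ - ψ*‖ ≤ C_R (τ_ψ + L_F ‖e‖)`, and likewise `‖ψ*‖ ≤ C_R M_F`. The residual is affine in `y`,
so `J(y) - J(y*) = (∂A/∂z) e` for `J = ∂R/∂z`; bounding an operator on `ℝ^m` by its columns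
costs a factor `√m`, whence `‖J(y) - J(y*)‖ ≤ √m C_A ‖e‖` and `‖J(y)‖ ≤ √m C_A C_𝒴 + C_b`.
The gradient error splits as
`(∇_z F(y) - ∇_z F(y*)) - J(y)ᵀ (ψ - ψ*) - (J(y) - J(y*))ᵀ ψ*`,
and the three bounds add up to `D_R τ_R + D_ψ τ_ψ`.
-/

open ContinuousLinearMap

/-- The partial Jacobian `∂R/∂z|_(z,y)` of the affine residual `R(z,y) = A(z) y - b(z)`. -/
noncomputable def partialJacZ {m n : ℕ}
    (A : EuclideanSpace ℝ (Fin m) → (EuclideanSpace ℝ (Fin n) →L[ℝ] EuclideanSpace ℝ (Fin n)))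
    (b : EuclideanSpace ℝ (Fin m) → EuclideanSpace ℝ (Fin n))
    (z : EuclideanSpace ℝ (Fin m)) (y : EuclideanSpace ℝ (Fin n)) :
    EuclideanSpace ℝ (Fin m) →L[ℝ] EuclideanSpace ℝ (Fin n) :=
  (fderiv ℝ A z).flip y - fderiv ℝ b z

/-- The partial gradient `∇_z F(z, y)` of `F : ℝ^m × ℝ^n → ℝ` (Euclidean product norm). -/
noncomputable def gradZF {m n : ℕ}
    (F : WithLp 2 (EuclideanSpace ℝ (Fin m) × EuclideanSpace ℝ (Fin n)) → ℝ)
    (z : EuclideanSpace ℝ (Fin m)) (y : EuclideanSpace ℝ (Fin n)) :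
    EuclideanSpace ℝ (Fin m) :=
  gradient (fun z' => F ((WithLp.equiv 2 _).symm (z', y))) z

open WithLp

theorem norm_toLp_sub_toLp_right {E G : Type*} [SeminormedAddCommGroup E]
    [SeminormedAddCommGroup G] (z : E) (y₁ y₂ : G) :
    ‖toLp 2 (z, y₁) - toLp 2 (z, y₂)‖ = ‖y₁ - y₂‖ := by
  rw [← toLp_sub, Prod.mk_sub_mk, sub_self, norm_toLp_snd]

section PartialGradient

variable {E G : Type*} [NormedAddCommGroup E] [InnerProductSpace ℝ E] [CompleteSpace E]
  [NormedAddCommGroup G] [InnerProductSpace ℝ G] [CompleteSpace G]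
  {F : WithLp 2 (E × G) → ℝ}

theorem hasGradientAt_comp_toLp_left {z : E} {y : G}
    (hF : DifferentiableAt ℝ F (toLp 2 (z, y))) :
    HasGradientAt (fun z' => F (toLp 2 (z', y))) (gradient F (toLp 2 (z, y))).fst z := by
  have hemb : HasFDerivAt (fun z' : E => toLp 2 (z', y))
      ((prodContinuousLinearEquiv 2 ℝ E G).symm.toContinuousLinearMap ∘L inl ℝ E G) z :=
    (prodContinuousLinearEquiv 2 ℝ E G).symm.hasFDerivAt.comp z (hasFDerivAt_prodMk_left z y)
  refine hasGradientAt_iff_hasFDerivAt.2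
    ((hF.hasGradientAt.hasFDerivAt.comp z hemb).congr_fderiv ?_)
  ext v
  generalize gradient F (toLp 2 (z, y)) = g
  simp [prod_inner_apply]

theorem hasGradientAt_comp_toLp_right {z : E} {y : G}
    (hF : DifferentiableAt ℝ F (toLp 2 (z, y))) :
    HasGradientAt (fun y' => F (toLp 2 (z, y'))) (gradient F (toLp 2 (z, y))).snd y := by
  have hemb : HasFDerivAt (fun y' : G => toLp 2 (z, y'))
      ((prodContinuousLinearEquiv 2 ℝ E G).symm.toContinuousLinearMap ∘L inr ℝ E G) y :=
    (prodContinuousLinearEquiv 2 ℝ E G).symm.hasFDerivAt.comp y (hasFDerivAt_prodMk_right z y)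
  refine hasGradientAt_iff_hasFDerivAt.2
    ((hF.hasGradientAt.hasFDerivAt.comp y hemb).congr_fderiv ?_)
  ext v
  generalize gradient F (toLp 2 (z, y)) = g
  simp [prod_inner_apply]

variable {L : ℝ}

theorem norm_gradient_comp_toLp_left_sub_le (hF : Differentiable ℝ F)
    (hL : ∀ w₁ w₂, ‖gradient F w₁ - gradient F w₂‖ ≤ L * ‖w₁ - w₂‖) (z : E) (y₁ y₂ : G) :
    ‖gradient (fun z' => F (toLp 2 (z', y₁))) z - gradient (fun z' => F (toLp 2 (z', y₂))) z‖
      ≤ L * ‖y₁ - y₂‖ := by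
  rw [(hasGradientAt_comp_toLp_left (hF _)).gradient,
    (hasGradientAt_comp_toLp_left (hF _)).gradient, ← norm_toLp_sub_toLp_right z y₁ y₂]
  exact (WithLp.norm_fst_le E _).trans (hL _ _)

theorem norm_gradient_comp_toLp_right_sub_le (hF : Differentiable ℝ F)
    (hL : ∀ w₁ w₂, ‖gradient F w₁ - gradient F w₂‖ ≤ L * ‖w₁ - w₂‖) (z : E) (y₁ y₂ : G) :
    ‖gradient (fun y' => F (toLp 2 (z, y'))) y₁ - gradient (fun y' => F (toLp 2 (z, y'))) y₂‖
      ≤ L * ‖y₁ - y₂‖ := by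
  rw [(hasGradientAt_comp_toLp_right (hF _)).gradient,
    (hasGradientAt_comp_toLp_right (hF _)).gradient, ← norm_toLp_sub_toLp_right z y₁ y₂]
  exact (WithLp.norm_snd_le E _).trans (hL _ _)

end PartialGradient

section Inverse

variable {𝕜 E F : Type*} [RCLike 𝕜]

theorem norm_le_opNorm_mul_of_comp_eq_id [SeminormedAddCommGroup E] [SeminormedAddCommGroup F]
    [NormedSpace 𝕜 E] [NormedSpace 𝕜 F] {T : E →L[𝕜] F} {S : F →L[𝕜] E}
    (hST : S ∘L T = ContinuousLinearMap.id 𝕜 E) (x : E) : ‖x‖ ≤ ‖S‖ * ‖T x‖ :=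
  calc ‖x‖ = ‖S (T x)‖ := by rw [← comp_apply, hST, id_apply]
    _ ≤ ‖S‖ * ‖T x‖ := le_opNorm S (T x)

variable [NormedAddCommGroup E] [InnerProductSpace 𝕜 E] [CompleteSpace E]
  [NormedAddCommGroup F] [InnerProductSpace 𝕜 F] [CompleteSpace F]
  {T : E →L[𝕜] F} {S : F →L[𝕜] E}

theorem norm_le_opNorm_mul_norm_adjoint_apply (hTS : T ∘L S = ContinuousLinearMap.id 𝕜 F)
    (ψ : F) : ‖ψ‖ ≤ ‖S‖ * ‖adjoint T ψ‖ := by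
  have h : adjoint S ∘L adjoint T = ContinuousLinearMap.id 𝕜 F := by
    rw [← adjoint_comp, hTS, adjoint_id]
  simpa only [adjoint.norm_map] using norm_le_opNorm_mul_of_comp_eq_id h ψ

theorem norm_sub_le_of_adjoint_apply_eq (hTS : T ∘L S = ContinuousLinearMap.id 𝕜 F)
    {ψ' : F} {g' : E} (hψ' : adjoint T ψ' = g') (ψ : F) (g : E) :
    ‖ψ - ψ'‖ ≤ ‖S‖ * (‖adjoint T ψ - g‖ + ‖g - g'‖) := by
  refine (norm_le_opNorm_mul_norm_adjoint_apply hTS _).trans ?_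
  rw [map_sub, hψ']
  gcongr
  exact norm_sub_le_norm_sub_add_norm_sub _ _ _

theorem norm_sub_adjoint_apply_sub_sub_adjoint_apply_le (g₁ g₂ : E) (J₁ J₂ : E →L[𝕜] F)
    (ψ₁ ψ₂ : F) :
    ‖(g₁ - adjoint J₁ ψ₁) - (g₂ - adjoint J₂ ψ₂)‖
      ≤ ‖g₁ - g₂‖ + ‖J₁‖ * ‖ψ₁ - ψ₂‖ + ‖J₁ - J₂‖ * ‖ψ₂‖ := by
  have hsplit : (g₁ - adjoint J₁ ψ₁) - (g₂ - adjoint J₂ ψ₂)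
      = (g₁ - g₂) - adjoint J₁ (ψ₁ - ψ₂) - adjoint (J₁ - J₂) ψ₂ := by
    simp only [map_sub, sub_apply]
    abel
  rw [hsplit]
  calc _ ≤ ‖g₁ - g₂‖ + ‖adjoint J₁ (ψ₁ - ψ₂)‖ + ‖adjoint (J₁ - J₂) ψ₂‖ :=
        (norm_sub_le _ _).trans (add_le_add_left (norm_sub_le _ _) _)
    _ ≤ ‖g₁ - g₂‖ + ‖J₁‖ * ‖ψ₁ - ψ₂‖ + ‖J₁ - J₂‖ * ‖ψ₂‖ := by
        rw [← adjoint.norm_map J₁, ← adjoint.norm_map (J₁ - J₂)]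
        gcongr <;> exact le_opNorm _ _

end Inverse

section Euclidean

variable {ι 𝕜 : Type*} [Fintype ι] [RCLike 𝕜]

theorem EuclideanSpace.sum_norm_le_sqrt_card_mul_norm (v : EuclideanSpace 𝕜 ι) :
    ∑ i, ‖v i‖ ≤ √(Fintype.card ι) * ‖v‖ := by
  rw [EuclideanSpace.norm_eq, ← Real.sqrt_mul (Nat.cast_nonneg _)]
  exact Real.le_sqrt_of_sq_le sq_sum_le_card_mul_sum_sq

variable [DecidableEq ι] {F : Type*} [SeminormedAddCommGroup F] [NormedSpace 𝕜 F]

theorem EuclideanSpace.opNorm_le_sqrt_card_mul (M : EuclideanSpace 𝕜 ι →L[𝕜] F) {C : ℝ}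
    (hC : 0 ≤ C) (hM : ∀ i, ‖M (EuclideanSpace.single i 1)‖ ≤ C) :
    ‖M‖ ≤ √(Fintype.card ι) * C := by
  refine opNorm_le_bound _ (by positivity) fun v => ?_
  have hv : v = ∑ i, v i • EuclideanSpace.single i (1 : 𝕜) := by
    simpa [EuclideanSpace.basisFun_apply] using ((EuclideanSpace.basisFun ι 𝕜).sum_repr v).symm
  calc ‖M v‖ = ‖∑ i, v i • M (EuclideanSpace.single i 1)‖ := by
        conv_lhs => rw [hv]
        simp only [map_sum, map_smul]
    _ ≤ ∑ i, ‖v i‖ * C := norm_sum_le_of_le _ fun i _ => by rw [norm_smul]; gcongr; exact hM i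
    _ = (∑ i, ‖v i‖) * C := (Finset.sum_mul ..).symm
    _ ≤ √(Fintype.card ι) * ‖v‖ * C := by gcongr; exact sum_norm_le_sqrt_card_mul_norm v
    _ = √(Fintype.card ι) * C * ‖v‖ := by ring

theorem EuclideanSpace.norm_flip_apply_le {G : Type*} [SeminormedAddCommGroup G]
    [NormedSpace 𝕜 G] (D : EuclideanSpace 𝕜 ι →L[𝕜] G →L[𝕜] F) {C : ℝ} (hC : 0 ≤ C)
    (hD : ∀ i, ‖D (EuclideanSpace.single i 1)‖ ≤ C) (u : G) :
    ‖D.flip u‖ ≤ √(Fintype.card ι) * C * ‖u‖ := by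
  rw [mul_assoc]
  refine opNorm_le_sqrt_card_mul _ (by positivity) fun i => ?_
  rw [flip_apply]
  exact (le_opNorm _ _).trans (by gcongr; exact hD i)

end Euclidean

section Residual

variable {m n : ℕ} {A : EuclideanSpace ℝ (Fin m) →
    (EuclideanSpace ℝ (Fin n) →L[ℝ] EuclideanSpace ℝ (Fin n))}
  {b : EuclideanSpace ℝ (Fin m) → EuclideanSpace ℝ (Fin n)} {z : EuclideanSpace ℝ (Fin m)}

theorem partialJacZ_sub_partialJacZ (y₁ y₂ : EuclideanSpace ℝ (Fin n)) :
    partialJacZ A b z y₁ - partialJacZ A b z y₂ = (fderiv ℝ A z).flip (y₁ - y₂) := by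
  simp only [partialJacZ, map_sub]
  abel

theorem norm_partialJacZ_le {CA Cb : ℝ} (hCA : 0 ≤ CA)
    (hA : ∀ k : Fin m, ‖fderiv ℝ A z (EuclideanSpace.single k 1)‖ ≤ CA)
    (hb : ‖fderiv ℝ b z‖ ≤ Cb) (y : EuclideanSpace ℝ (Fin n)) :
    ‖partialJacZ A b z y‖ ≤ √m * CA * ‖y‖ + Cb := by
  refine (norm_sub_le _ _).trans (add_le_add ?_ hb)
  simpa using EuclideanSpace.norm_flip_apply_le (fderiv ℝ A z) hCA hA y

end Residual

theorem nonneg_of_norm_sub_le_mul {X Y : Type*} [NormedAddCommGroup X] [Nontrivial X]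
    [SeminormedAddGroup Y] {f : X → Y} {L : ℝ} (hf : ∀ a b, ‖f a - f b‖ ≤ L * ‖a - b‖) :
    0 ≤ L := by
  obtain ⟨x, hx⟩ := exists_ne (0 : X)
  refine nonneg_of_mul_nonneg_left ((norm_nonneg _).trans (hf x 0)) ?_
  rwa [sub_zero, norm_pos_iff]

theorem bddAbove_norm_image_of_norm_sub_le {X Y : Type*} [SeminormedAddGroup X]
    [SeminormedAddGroup Y] {f : X → Y} {L r : ℝ} (hL : 0 ≤ L)
    (hf : ∀ a b, ‖f a - f b‖ ≤ L * ‖a - b‖) {s : Set X} {x₀ : X}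
    (hs : ∀ x ∈ s, ‖x - x₀‖ ≤ r) : BddAbove ((fun x => ‖f x‖) '' s) :=
  ⟨‖f x₀‖ + L * r, Set.forall_mem_image.2 fun x hx => (norm_le_norm_add_norm_sub' _ (f x₀)).trans
    (add_le_add_right ((hf x x₀).trans (mul_le_mul_of_nonneg_left (hs x hx) hL)) _)⟩

theorem stmt4_general {m n : ℕ}
    (zhat : EuclideanSpace ℝ (Fin m)) (τR τψ : ℝ) (hτR : 0 < τR)
    (A Ainv : EuclideanSpace ℝ (Fin m) →
      (EuclideanSpace ℝ (Fin n) →L[ℝ] EuclideanSpace ℝ (Fin n)))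
    (b : EuclideanSpace ℝ (Fin m) → EuclideanSpace ℝ (Fin n))
    (hAinv : ∀ z, (A z).comp (Ainv z) = ContinuousLinearMap.id ℝ (EuclideanSpace ℝ (Fin n)) ∧
      (Ainv z).comp (A z) = ContinuousLinearMap.id ℝ (EuclideanSpace ℝ (Fin n)))
    (CA Cb : ℝ) (hCA : 0 < CA)
    (hAbound : ∀ z (k : Fin m), ‖fderiv ℝ A z (EuclideanSpace.single k (1 : ℝ))‖ ≤ CA)
    (hbbound : ∀ z, ‖fderiv ℝ b z‖ ≤ Cb)
    (F : WithLp 2 (EuclideanSpace ℝ (Fin m) × EuclideanSpace ℝ (Fin n)) → ℝ)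
    (hF : ContDiff ℝ 1 F) (LF : ℝ)
    (hLF : ∀ w₁ w₂, ‖gradient F w₁ - gradient F w₂‖ ≤ LF * ‖w₁ - w₂‖)
    -- the admissible state set, the exact state, and the exact adjoint
    (Yset : Set (EuclideanSpace ℝ (Fin n)))
    (hYset : Yset = {y | ‖A zhat y - b zhat‖ ≤ τR})
    (ystar : EuclideanSpace ℝ (Fin n)) (hystar : ystar = Ainv zhat (b zhat))
    (ψstar : EuclideanSpace ℝ (Fin n))
    (hψstar : ContinuousLinearMap.adjoint (A zhat) ψstar = gradYF F zhat ystar)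
    -- the constants C_R(ẑ), C_{𝒴_ẑ}, M_F(ẑ), D_R(ẑ), D_ψ(ẑ)
    (CR CY MF DR Dψ : ℝ)
    (hCR : CR = ‖Ainv zhat‖) (hCY : CY = sSup (norm '' Yset))
    (hMF : MF = sSup ((fun y => ‖gradYF F zhat y‖) '' Yset))
    (hDR : DR = LF * CR + LF * (Real.sqrt m * CA * CY + Cb) * CR ^ 2
      + Real.sqrt m * CA * MF * CR ^ 2)
    (hDψ : Dψ = (Real.sqrt m * CA * CY + Cb) * CR) :
    ∀ y ∈ Yset,
      ∀ ψ ∈ {ψ : EuclideanSpace ℝ (Fin n) |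
          ‖ContinuousLinearMap.adjoint (A zhat) ψ - gradYF F zhat y‖ ≤ τψ},
        ‖(gradZF F zhat y - ContinuousLinearMap.adjoint (partialJacZ A b zhat y) ψ)
          - (gradZF F zhat ystar
              - ContinuousLinearMap.adjoint (partialJacZ A b zhat ystar) ψstar)‖
          ≤ DR * τR + Dψ * τψ := by
  intro y hy ψ hψ
  -- `hLF` forces `0 ≤ LF` only on a nonzero state space; for `n = 0` both sides vanish.
  rcases subsingleton_or_nontrivial (EuclideanSpace ℝ (Fin n)) with hn | hn
  · have hCR0 : CR = 0 := by rw [hCR, Subsingleton.elim (Ainv zhat) 0, norm_zero]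
    simp [Subsingleton.elim y ystar, Subsingleton.elim ψ ψstar, hDR, hDψ, hCR0]
  have hFd : Differentiable ℝ F := hF.differentiable one_ne_zero
  have hgY : ∀ y₁ y₂, ‖gradYF F zhat y₁ - gradYF F zhat y₂‖ ≤ LF * ‖y₁ - y₂‖ :=
    norm_gradient_comp_toLp_right_sub_le hFd hLF zhat
  have hLF0 : 0 ≤ LF := nonneg_of_norm_sub_le_mul hgY
  have hCR0 : 0 ≤ CR := hCR ▸ norm_nonneg _
  have hAystar : A zhat ystar = b zhat := by rw [hystar, ← comp_apply, (hAinv zhat).1, id_apply]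
  have hystar_mem : ystar ∈ Yset := by simpa [hYset, hAystar] using hτR.le
  have hres : ∀ y' ∈ Yset, ‖y' - ystar‖ ≤ CR * τR := by
    intro y' hy'
    rw [hYset] at hy'
    calc ‖y' - ystar‖ ≤ CR * ‖A zhat (y' - ystar)‖ :=
          hCR ▸ norm_le_opNorm_mul_of_comp_eq_id (hAinv zhat).2 _
      _ ≤ CR * τR := by rw [map_sub, hAystar]; gcongr; exact hy'
  have hyCY : ∀ y' ∈ Yset, ‖y'‖ ≤ CY := fun y' hy' => hCY ▸ le_csSup
    (bddAbove_norm_image_of_norm_sub_le (f := id) zero_le_one (by simp) hres) ⟨y', hy', rfl⟩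
  have hMF1 : ∀ y' ∈ Yset, ‖gradYF F zhat y'‖ ≤ MF := fun y' hy' => hMF ▸ le_csSup
    (bddAbove_norm_image_of_norm_sub_le hLF0 hgY hres) ⟨y', hy', rfl⟩
  have hψ_sub : ‖ψ - ψstar‖ ≤ CR * (τψ + LF * (CR * τR)) := by
    refine (norm_sub_le_of_adjoint_apply_eq (hAinv zhat).1 hψstar ψ (gradYF F zhat y)).trans ?_
    rw [← hCR]
    gcongr
    exacts [hψ, (hgY y ystar).trans (by gcongr; exact hres y hy)]
  have hψstar_le : ‖ψstar‖ ≤ CR * MF := by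
    refine (norm_le_opNorm_mul_norm_adjoint_apply (hAinv zhat).1 ψstar).trans ?_
    rw [← hCR, hψstar]
    gcongr
    exact hMF1 ystar hystar_mem
  have hJ : ‖partialJacZ A b zhat y‖ ≤ √m * CA * CY + Cb :=
    (norm_partialJacZ_le hCA.le (hAbound zhat) (hbbound zhat) y).trans (by gcongr; exact hyCY y hy)
  have hJ_sub : ‖partialJacZ A b zhat y - partialJacZ A b zhat ystar‖ ≤ √m * CA * (CR * τR) := by
    rw [partialJacZ_sub_partialJacZ]
    refine (EuclideanSpace.norm_flip_apply_le _ hCA.le (hAbound zhat) _).trans ?_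
    simpa using mul_le_mul_of_nonneg_left (hres y hy) (by positivity : 0 ≤ √m * CA)
  calc _ ≤ ‖gradZF F zhat y - gradZF F zhat ystar‖ + ‖partialJacZ A b zhat y‖ * ‖ψ - ψstar‖
        + ‖partialJacZ A b zhat y - partialJacZ A b zhat ystar‖ * ‖ψstar‖ :=
      norm_sub_adjoint_apply_sub_sub_adjoint_apply_le _ _ _ _ _ _
    _ ≤ LF * (CR * τR) + (√m * CA * CY + Cb) * (CR * (τψ + LF * (CR * τR)))
        + √m * CA * (CR * τR) * (CR * MF) := by
      have hK : 0 ≤ √m * CA * CY + Cb := (norm_nonneg _).trans hJ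
      gcongr
      exact (norm_gradient_comp_toLp_left_sub_le hFd hLF zhat y ystar).trans
        (by gcongr; exact hres y hy)
    _ = DR * τR + Dψ * τψ := by rw [hDR, hDψ]; ring

theorem stmt4 {m n : ℕ}
    (zhat : EuclideanSpace ℝ (Fin m)) (τR τψ : ℝ) (hτR : 0 < τR) (hτψ : 0 < τψ)
    (A Ainv : EuclideanSpace ℝ (Fin m) →
      (EuclideanSpace ℝ (Fin n) →L[ℝ] EuclideanSpace ℝ (Fin n)))
    (b : EuclideanSpace ℝ (Fin m) → EuclideanSpace ℝ (Fin n))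
    (hA : ContDiff ℝ 1 A) (hb : ContDiff ℝ 1 b)
    (hAinv : ∀ z, (A z).comp (Ainv z) = ContinuousLinearMap.id ℝ (EuclideanSpace ℝ (Fin n)) ∧
      (Ainv z).comp (A z) = ContinuousLinearMap.id ℝ (EuclideanSpace ℝ (Fin n)))
    (CA Cb : ℝ) (hCA : 0 < CA) (hCb : 0 < Cb)
    (hAbound : ∀ z (k : Fin m), ‖fderiv ℝ A z (EuclideanSpace.single k (1 : ℝ))‖ ≤ CA)
    (hbbound : ∀ z, ‖fderiv ℝ b z‖ ≤ Cb)
    (F : WithLp 2 (EuclideanSpace ℝ (Fin m) × EuclideanSpace ℝ (Fin n)) → ℝ)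
    (hF : ContDiff ℝ 1 F) (LF : ℝ)
    (hLF : ∀ w₁ w₂, ‖gradient F w₁ - gradient F w₂‖ ≤ LF * ‖w₁ - w₂‖)
    -- the admissible state set, the exact state, and the exact adjoint
    (Yset : Set (EuclideanSpace ℝ (Fin n)))
    (hYset : Yset = {y | ‖A zhat y - b zhat‖ ≤ τR})
    (ystar : EuclideanSpace ℝ (Fin n)) (hystar : ystar = Ainv zhat (b zhat))
    (ψstar : EuclideanSpace ℝ (Fin n))
    (hψstar : ContinuousLinearMap.adjoint (A zhat) ψstar = gradYF F zhat ystar)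
    -- the constants C_R(ẑ), C_{𝒴_ẑ}, M_F(ẑ), D_R(ẑ), D_ψ(ẑ)
    (CR CY MF DR Dψ : ℝ)
    (hCR : CR = ‖Ainv zhat‖) (hCY : CY = sSup (norm '' Yset))
    (hMF : MF = sSup ((fun y => ‖gradYF F zhat y‖) '' Yset))
    (hDR : DR = LF * CR + LF * (Real.sqrt m * CA * CY + Cb) * CR ^ 2
      + Real.sqrt m * CA * MF * CR ^ 2)
    (hDψ : Dψ = (Real.sqrt m * CA * CY + Cb) * CR) :
    ∀ y ∈ Yset,
      ∀ ψ ∈ {ψ : EuclideanSpace ℝ (Fin n) |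
          ‖ContinuousLinearMap.adjoint (A zhat) ψ - gradYF F zhat y‖ ≤ τψ},
        ‖(gradZF F zhat y - ContinuousLinearMap.adjoint (partialJacZ A b zhat y) ψ)
          - (gradZF F zhat ystar
              - ContinuousLinearMap.adjoint (partialJacZ A b zhat ystar) ψstar)‖
          ≤ DR * τR + Dψ * τψ :=
  stmt4_general zhat τR τψ hτR A Ainv b hAinv CA Cb hCA hAbound hbbound F hF LF hLF Yset hYset ystar
    hystar ψstar hψstar CR CY MF DR Dψ hCR hCY hMF hDR hDψ
end

section
/- Let F̃ : ℝ^m → ℝ be differentiable, and let sequences (z_k), (s_k), (∇̄F̃(z_k)) in ℝ^m satisfy, for constants c₁', c₂' > 0 and all k: (i) c₁'‖∇̄F̃(z_k)‖₂² ≤ −⟨∇̄F̃(z_k), s_k⟩; (ii) ‖s_k‖₂ ≤ c₂'‖∇̄F̃(z_k)‖₂; and (iii) ‖∇̄F̃(z_k) − ∇F̃(z_k)‖₂ ≤ ζ‖∇̄F̃(z_k)‖₂ with ζ ∈ [0, c₁'/c₂'). Then for all k, c₁‖∇F̃(z_k)‖₂² ≤ −⟨∇F̃(z_k), s_k⟩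 and ‖s_k‖₂ ≤ c₂‖∇F̃(z_k)‖₂, where c₁ = (c₁' − ζc₂')/(1+ζ)² and c₂ = c₂'/(1−ζ). -/
open scoped RealInnerProductSpace

/-!
Write `g` for the inexact gradient and `d` for the true one. Cauchy–Schwarz bounds the change in the
descent term by `‖g - d‖ ‖s‖ ≤ ζ c₂' ‖g‖²`, and the triangle inequality pins `‖d‖` between
`(1 - ζ) ‖g‖` and `(1 + ζ) ‖g‖`; rescaling by these bounds turns the conditions for `g` into the
conditions for `d`. That `ζ < 1` follows from `c₁' ≤ c₂'`, which the two conditions force as soon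
as `g ≠ 0`.
-/

section DirectionConditions

variable {E : Type*} [SeminormedAddCommGroup E]

theorem norm_le_one_add_mul_of_norm_sub_le {g d : E} {ζ : ℝ} (h : ‖g - d‖ ≤ ζ * ‖g‖) :
    ‖d‖ ≤ (1 + ζ) * ‖g‖ := by
  linarith [norm_le_norm_add_norm_sub g d]

theorem one_sub_mul_le_norm_of_norm_sub_le {g d : E} {ζ : ℝ} (h : ‖g - d‖ ≤ ζ * ‖g‖) :
    (1 - ζ) * ‖g‖ ≤ ‖d‖ := by
  linarith [norm_sub_norm_le g d]

variable [InnerProductSpace ℝ E]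

def GeneralDirectionConditions (c₁ c₂ : ℝ) (g s : E) : Prop :=
  c₁ * ‖g‖ ^ 2 ≤ -⟪g, s⟫ ∧ ‖s‖ ≤ c₂ * ‖g‖

namespace GeneralDirectionConditions

variable {c₁ c₂ ζ : ℝ} {g d s : E}

theorem le_of_norm_pos (hgs : GeneralDirectionConditions c₁ c₂ g s) (hg : 0 < ‖g‖) : c₁ ≤ c₂ := by
  have h : c₁ * ‖g‖ ^ 2 ≤ c₂ * ‖g‖ ^ 2 :=
    calc c₁ * ‖g‖ ^ 2 ≤ -⟪g, s⟫ := hgs.1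
      _ ≤ ‖g‖ * ‖s‖ := (neg_le_abs _).trans (abs_real_inner_le_norm g s)
      _ ≤ ‖g‖ * (c₂ * ‖g‖) := by gcongr; exact hgs.2
      _ = c₂ * ‖g‖ ^ 2 := by ring
  exact le_of_mul_le_mul_right h (by positivity)

theorem mul_norm_sq_le_neg_inner (hgs : GeneralDirectionConditions c₁ c₂ g s)
    (herr : ‖g - d‖ ≤ ζ * ‖g‖) : (c₁ - ζ * c₂) * ‖g‖ ^ 2 ≤ -⟪d, s⟫ := by
  have hζg : 0 ≤ ζ * ‖g‖ := (norm_nonneg _).trans herr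
  have hcross : -⟪g - d, s⟫ ≤ ζ * ‖g‖ * (c₂ * ‖g‖) :=
    calc -⟪g - d, s⟫ ≤ ‖g - d‖ * ‖s‖ := (neg_le_abs _).trans (abs_real_inner_le_norm _ _)
      _ ≤ ζ * ‖g‖ * (c₂ * ‖g‖) := mul_le_mul herr hgs.2 (norm_nonneg _) hζg
  have hsplit : -⟪d, s⟫ = -⟪g, s⟫ + ⟪g - d, s⟫ := by rw [inner_sub_left]; ring
  nlinarith [hgs.1]

theorem of_norm_sub_le (hgs : GeneralDirectionConditions c₁ c₂ g s) (hc₂ : 0 < c₂)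
    (hζ : 0 ≤ ζ) (hζlt : ζ < c₁ / c₂) (herr : ‖g - d‖ ≤ ζ * ‖g‖) :
    GeneralDirectionConditions ((c₁ - ζ * c₂) / (1 + ζ) ^ 2) (c₂ / (1 - ζ)) d s := by
  have hc : 0 ≤ c₁ - ζ * c₂ := by linarith [(lt_div_iff₀ hc₂).mp hζlt]
  constructor
  · have hd : ‖d‖ ^ 2 ≤ (1 + ζ) ^ 2 * ‖g‖ ^ 2 := by
      rw [← mul_pow]
      exact pow_le_pow_left₀ (norm_nonneg _) (norm_le_one_add_mul_of_norm_sub_le herr) 2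
    calc (c₁ - ζ * c₂) / (1 + ζ) ^ 2 * ‖d‖ ^ 2
        ≤ (c₁ - ζ * c₂) / (1 + ζ) ^ 2 * ((1 + ζ) ^ 2 * ‖g‖ ^ 2) := by gcongr
      _ = (c₁ - ζ * c₂) * ‖g‖ ^ 2 := by field_simp
      _ ≤ -⟪d, s⟫ := hgs.mul_norm_sq_le_neg_inner herr
  · rcases (norm_nonneg g).eq_or_lt with hg | hg
    · have hs : ‖s‖ ≤ 0 := by simpa [← hg] using hgs.2
      have hd : ‖d‖ ≤ 0 := by simpa [← hg] using norm_le_one_add_mul_of_norm_sub_le herr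
      rw [hd.antisymm (norm_nonneg d), mul_zero]
      exact hs
    · have hζ1 : ζ < 1 := hζlt.trans_le ((div_le_one hc₂).mpr (hgs.le_of_norm_pos hg))
      rw [div_mul_eq_mul_div, le_div_iff₀ (by linarith)]
      calc ‖s‖ * (1 - ζ) ≤ c₂ * ‖g‖ * (1 - ζ) := mul_le_mul_of_nonneg_right hgs.2 (by linarith)
        _ = c₂ * ((1 - ζ) * ‖g‖) := by ring
        _ ≤ c₂ * ‖d‖ := by gcongr; exact one_sub_mul_le_norm_of_norm_sub_le herr

end GeneralDirectionConditions

end DirectionConditions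

theorem stmt9_general {m : ℕ} (F : EuclideanSpace ℝ (Fin m) → ℝ)
    (z s gbar : ℕ → EuclideanSpace ℝ (Fin m))
    (c₁' c₂' ζ : ℝ) (hc₂' : 0 < c₂')
    (hζ : 0 ≤ ζ) (hζlt : ζ < c₁' / c₂')
    (h₁ : ∀ k, c₁' * ‖gbar k‖ ^ 2 ≤ -⟪gbar k, s k⟫)
    (h₂ : ∀ k, ‖s k‖ ≤ c₂' * ‖gbar k‖)
    (herr : ∀ k, ‖gbar k - gradient F (z k)‖ ≤ ζ * ‖gbar k‖) :
    ∀ k, (c₁' - ζ * c₂') / (1 + ζ) ^ 2 * ‖gradient F (z k)‖ ^ 2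
        ≤ -⟪gradient F (z k), s k⟫ ∧
      ‖s k‖ ≤ c₂' / (1 - ζ) * ‖gradient F (z k)‖ := fun k =>
  GeneralDirectionConditions.of_norm_sub_le ⟨h₁ k, h₂ k⟩ hc₂' hζ hζlt (herr k)

theorem stmt9 {m : ℕ} (F : EuclideanSpace ℝ (Fin m) → ℝ) (hF : Differentiable ℝ F)
    (z s gbar : ℕ → EuclideanSpace ℝ (Fin m))
    (c₁' c₂' ζ : ℝ) (hc₁' : 0 < c₁') (hc₂' : 0 < c₂')
    (hζ : 0 ≤ ζ) (hζlt : ζ < c₁' / c₂')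
    (h₁ : ∀ k, c₁' * ‖gbar k‖ ^ 2 ≤ -⟪gbar k, s k⟫)
    (h₂ : ∀ k, ‖s k‖ ≤ c₂' * ‖gbar k‖)
    (herr : ∀ k, ‖gbar k - gradient F (z k)‖ ≤ ζ * ‖gbar k‖) :
    ∀ k, (c₁' - ζ * c₂') / (1 + ζ) ^ 2 * ‖gradient F (z k)‖ ^ 2
        ≤ -⟪gradient F (z k), s k⟫ ∧
      ‖s k‖ ≤ c₂' / (1 - ζ) * ‖gradient F (z k)‖ :=
  stmt9_general F z s gbar c₁' c₂' ζ hc₂' hζ hζlt h₁ h₂ herr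
end

section
/- Let F̃ : ℝ^m → ℝ be continuously differentiable with L-Lipschitz gradient, let (z_k) be generated by z_{k+1} = z_k + t_k s_k with t_k > 0, and suppose ‖s_k‖₂ ≤ c₂‖∇F̃(z_k)‖₂ for a constant c₂ > 0 and all k. If ∑_{k=0}^∞ t_k‖∇F̃(z_k)‖₂² < ∞ and liminf_{k→∞} ‖∇F̃(z_k)‖₂ = 0, then lim_{k→∞} ‖∇F̃(z_k)‖₂ = 0. -/
/-!
Write `g k = ‖∇F̃(z_k)‖`. The Lipschitz gradient and the step bound give the one-step estimate
`|g (k+1) - g k| ≤ w k * g k` with `w k = L c₂ t_k`, while `∑ w k * g k ^ 2 < ∞`. As long as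
`g ≥ a > 0`, the one-step estimate is dominated by `w k * g k ^ 2 / a`, so `g` moves by at most a tail
of a convergent series divided by `a`. If `g` drops below every `ε > 0` infinitely often, an excursion
from `g n ≥ ε` down to the next index with `g < ε / 2` would have to cover a distance `ε / 2` with a
late tail of the series, which is impossible. Otherwise `g ≥ δ > 0` eventually, so `g` is Cauchy and
its limit is the liminf, namely `0`. The second case is needed because the real `liminf` of a
sequence tending to `+∞` is the junk value `0`.
-/

open Filter Finset Topology

section

variable {g w : ℕ → ℝ}

theorem dist_succ_le_of_le (hw : ∀ k, 0 ≤ w k) (hstep : ∀ k, dist (g k) (g (k + 1)) ≤ w k * g k)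
    {a : ℝ} (ha : 0 < a) {k : ℕ} (hk : a ≤ g k) :
    dist (g k) (g (k + 1)) ≤ w k * g k ^ 2 / a := by
  refine (hstep k).trans ?_
  rw [le_div_iff₀ ha]
  calc w k * g k * a ≤ w k * g k * g k :=
        mul_le_mul_of_nonneg_left hk (mul_nonneg (hw k) (ha.le.trans hk))
    _ = w k * g k ^ 2 := by ring

theorem dist_le_sum_mul_sq_div (hw : ∀ k, 0 ≤ w k)
    (hstep : ∀ k, dist (g k) (g (k + 1)) ≤ w k * g k) {a : ℝ} (ha : 0 < a) {n M : ℕ} (hnM : n ≤ M)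
    (hlow : ∀ k, n ≤ k → k < M → a ≤ g k) :
    dist (g n) (g M) ≤ (∑ k ∈ Ico n M, w k * g k ^ 2) / a := by
  rw [sum_div]
  exact dist_le_Ico_sum_of_dist_le hnM fun hnk hkM => dist_succ_le_of_le hw hstep ha (hlow _ hnk hkM)

theorem tendsto_zero_of_frequently_lt (hg : ∀ k, 0 ≤ g k) (hw : ∀ k, 0 ≤ w k)
    (hstep : ∀ k, dist (g k) (g (k + 1)) ≤ w k * g k) (hsum : Summable fun k => w k * g k ^ 2)
    (hfreq : ∀ ε > 0, ∃ᶠ k in atTop, g k < ε) :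
    Tendsto g atTop (𝓝 0) := by
  classical
  rw [Metric.tendsto_atTop]
  intro ε hε
  obtain ⟨N, hN⟩ :=
    Metric.cauchySeq_iff.mp hsum.hasSum.tendsto_sum_nat.cauchySeq (ε ^ 2 / 4) (by positivity)
  refine ⟨N, fun n hn => ?_⟩
  rw [Real.dist_0_eq_abs, abs_of_nonneg (hg n)]
  by_contra! hεn
  have hex : ∃ M, n ≤ M ∧ g M < ε / 2 := frequently_atTop.mp (hfreq _ (half_pos hε)) n
  obtain ⟨hnM, hM⟩ := Nat.find_spec hex
  have hlow : ∀ k, n ≤ k → k < Nat.find hex → ε / 2 ≤ g k :=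
    fun k hnk hkM => not_lt.mp fun hk => Nat.find_min hex hkM ⟨hnk, hk⟩
  have htail : ∑ k ∈ Ico n (Nat.find hex), w k * g k ^ 2 < ε ^ 2 / 4 := by
    rw [sum_Ico_eq_sub _ hnM]
    exact (le_abs_self _).trans_lt (hN _ (hn.trans hnM) n hn)
  have hexcursion := dist_le_sum_mul_sq_div hw hstep (half_pos hε) hnM hlow
  rw [Real.dist_eq] at hexcursion
  have hsmall : (∑ k ∈ Ico n (Nat.find hex), w k * g k ^ 2) / (ε / 2) < ε / 2 := by
    rw [div_lt_iff₀ (half_pos hε)]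
    linarith
  linarith [le_abs_self (g n - g (Nat.find hex))]

theorem cauchySeq_of_eventually_ge (hw : ∀ k, 0 ≤ w k)
    (hstep : ∀ k, dist (g k) (g (k + 1)) ≤ w k * g k) (hsum : Summable fun k => w k * g k ^ 2)
    {δ : ℝ} (hδ : 0 < δ) (hge : ∀ᶠ k in atTop, δ ≤ g k) :
    CauchySeq g :=
  cauchySeq_of_summable_dist <| (hsum.div_const δ).of_norm_bounded_eventually_nat <|
    hge.mono fun _ hk => by
      rw [Real.norm_of_nonneg dist_nonneg]
      exact dist_succ_le_of_le hw hstep hδ hk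

theorem tendsto_zero_of_summable_mul_sq (hg : ∀ k, 0 ≤ g k) (hw : ∀ k, 0 ≤ w k)
    (hstep : ∀ k, dist (g k) (g (k + 1)) ≤ w k * g k) (hsum : Summable fun k => w k * g k ^ 2)
    (hliminf : liminf g atTop = 0) :
    Tendsto g atTop (𝓝 0) := by
  by_cases hfreq : ∀ ε > 0, ∃ᶠ k in atTop, g k < ε
  · exact tendsto_zero_of_frequently_lt hg hw hstep hsum hfreq
  push Not at hfreq
  obtain ⟨δ, hδ, hge⟩ := hfreq
  obtain ⟨a, ha⟩ := cauchySeq_tendsto_of_complete (cauchySeq_of_eventually_ge hw hstep hsum hδ hge)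
  rwa [← hliminf, ha.liminf_eq]

end

theorem dist_norm_le_of_add_smul {E E' : Type*} [SeminormedAddCommGroup E] [NormedSpace ℝ E]
    [SeminormedAddCommGroup E'] {G : E → E'} {L : ℝ} (hL : ∀ x y, ‖G x - G y‖ ≤ L * ‖x - y‖)
    {x d : E} {τ c : ℝ} (hτ : 0 ≤ τ) (hd : ‖d‖ ≤ c * ‖G x‖) :
    dist ‖G x‖ ‖G (x + τ • d)‖ ≤ |L| * c * τ * ‖G x‖ :=
  calc dist ‖G x‖ ‖G (x + τ • d)‖ ≤ ‖G x - G (x + τ • d)‖ := dist_norm_norm_le _ _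
    _ ≤ L * ‖x - (x + τ • d)‖ := hL _ _
    _ ≤ |L| * (τ * ‖d‖) := by
        rw [sub_add_cancel_left, norm_neg, norm_smul, Real.norm_of_nonneg hτ]
        exact mul_le_mul_of_nonneg_right (le_abs_self L) (by positivity)
    _ ≤ |L| * (τ * (c * ‖G x‖)) := by gcongr
    _ = |L| * c * τ * ‖G x‖ := by ring

theorem stmt12_general {m : ℕ} (F : EuclideanSpace ℝ (Fin m) → ℝ) (L : ℝ)
    (hL : ∀ x y, ‖gradient F x - gradient F y‖ ≤ L * ‖x - y‖)
    (z s : ℕ → EuclideanSpace ℝ (Fin m)) (t : ℕ → ℝ) (ht : ∀ k, 0 < t k)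
    (hiter : ∀ k, z (k + 1) = z k + t k • s k)
    (c₂ : ℝ) (hc₂ : 0 < c₂)
    (h₂ : ∀ k, ‖s k‖ ≤ c₂ * ‖gradient F (z k)‖)
    (hsum : Summable (fun k => t k * ‖gradient F (z k)‖ ^ 2))
    (hliminf : liminf (fun k => ‖gradient F (z k)‖) atTop = 0) :
    Tendsto (fun k => ‖gradient F (z k)‖) atTop (nhds 0) := by
  refine tendsto_zero_of_summable_mul_sq (w := fun k => |L| * c₂ * t k) (fun _ => norm_nonneg _)
    (fun k => mul_nonneg (mul_nonneg (abs_nonneg L) hc₂.le) (ht k).le) (fun k => ?_) ?_ hliminf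
  · rw [hiter k]
    exact dist_norm_le_of_add_smul hL (ht k).le (h₂ k)
  · simpa only [mul_assoc] using hsum.mul_left (|L| * c₂)

theorem stmt12 {m : ℕ} (F : EuclideanSpace ℝ (Fin m) → ℝ) (L : ℝ)
    (hF : ContDiff ℝ 1 F)
    (hL : ∀ x y, ‖gradient F x - gradient F y‖ ≤ L * ‖x - y‖)
    (z s : ℕ → EuclideanSpace ℝ (Fin m)) (t : ℕ → ℝ) (ht : ∀ k, 0 < t k)
    (hiter : ∀ k, z (k + 1) = z k + t k • s k)
    (c₂ : ℝ) (hc₂ : 0 < c₂)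
    (h₂ : ∀ k, ‖s k‖ ≤ c₂ * ‖gradient F (z k)‖)
    (hsum : Summable (fun k => t k * ‖gradient F (z k)‖ ^ 2))
    (hliminf : liminf (fun k => ‖gradient F (z k)‖) atTop = 0) :
    Tendsto (fun k => ‖gradient F (z k)‖) atTop (nhds 0) :=
  stmt12_general F L hL z s t ht hiter c₂ hc₂ h₂ hsum hliminf
end

section
/- Let F̃ : ℝ^m → ℝ be continuously differentiable with L-Lipschitz gradient and F̃(z_k) ≥ F̃_inf for all k, where (z_k) is generated by z_{k+1} = z_k + t_k s_k. Suppose the directions satisfy the exact general direction conditions c₁‖∇F̃(z_k)‖₂² ≤ −⟨∇F̃(z_k), s_k⟩ and ‖s_k‖₂ ≤ c₂‖∇F̃(z_k)‖₂ with c₁, c₂ > 0 for all k, and that the positive step sizes satisfy t_k → 0 and ∑_{k=0}^∞ t_k = ∞. Then ∇F̃(z_k) → 0 as k → ∞, and every limit point of (z_k) is a stationary point of F̃. -/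
open Filter Topology InnerProductSpace
open scoped RealInnerProductSpace

/-!
For an `L`-Lipschitz gradient, `F (z + t s) ≤ F z + t ⟪∇F z, s⟫ + L t² ‖s‖²`, so once
`L c₂² t_k ≤ c₁ / 2` every step decreases `F` by at least `(c₁ / 2) t_k ‖∇F (z_k)‖²`; as `F` is
bounded below along the iterates, `∑ t_k ‖∇F (z_k)‖²` converges. The Lipschitz bound also gives
`‖∇F (z_{k+1})‖ ≤ (1 + L c₂ t_k) ‖∇F (z_k)‖`, so `u_k = ‖∇F (z_k)‖²` increases by at most the
summable amounts `3 L c₂ t_k u_k` and therefore converges. Its limit is `0`, for otherwise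
`∑ t_k` would be dominated by a multiple of `∑ t_k u_k`. Limit points are stationary because
`∇F` is continuous.
-/

section Sequences

theorem summable_of_eventually_le_sub {a w : ℕ → ℝ} {B : ℝ} (hw : ∀ k, 0 ≤ w k)
    (hB : ∀ k, B ≤ a k) (h : ∀ᶠ k in atTop, a (k + 1) ≤ a k - w k) : Summable w := by
  obtain ⟨N, hN⟩ := eventually_atTop.1 h
  rw [← summable_nat_add_iff N]
  refine summable_of_sum_range_le (c := a N - B) (fun k => hw _) fun n => ?_
  have hle : ∑ i ∈ Finset.range n, w (i + N) ≤ ∑ i ∈ Finset.range n, (a (i + N) - a (i + 1 + N)) :=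
    Finset.sum_le_sum fun i _ => by
      rw [Nat.add_right_comm]
      linarith [hN (i + N) (Nat.le_add_left N i)]
  rw [Finset.sum_range_sub' (fun i => a (i + N)), zero_add] at hle
  linarith [hB (n + N)]

theorem exists_tendsto_of_le_add_of_summable {u w : ℕ → ℝ} {B : ℝ} (hw : ∀ k, 0 ≤ w k)
    (hsum : Summable w) (hB : ∀ k, B ≤ u k) (h : ∀ k, u (k + 1) ≤ u k + w k) :
    ∃ ℓ, Tendsto u atTop (𝓝 ℓ) := by
  set v : ℕ → ℝ := fun k => u k - ∑ i ∈ Finset.range k, w i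
  have hv : Antitone v := antitone_nat_of_succ_le fun k => by
    simp only [v, Finset.sum_range_succ]
    linarith [h k]
  have hvB : BddBelow (Set.range v) := ⟨B - ∑' i, w i, by
    rintro _ ⟨k, rfl⟩
    linarith [hB k, hsum.sum_le_tsum (Finset.range k) fun i _ => hw i]⟩
  exact ⟨_, ((tendsto_atTop_ciInf hv hvB).add hsum.tendsto_sum_tsum_nat).congr fun k => by
    simp [v]⟩

theorem tendsto_zero_of_summable_mul_of_le_add {u t : ℕ → ℝ} {b : ℝ} (hu : ∀ k, 0 ≤ u k)
    (ht : ∀ k, 0 ≤ t k) (htsum : ¬Summable t) (hb : 0 ≤ b)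
    (hsum : Summable fun k => t k * u k)
    (h : ∀ᶠ k in atTop, u (k + 1) ≤ u k + b * (t k * u k)) :
    Tendsto u atTop (𝓝 0) := by
  obtain ⟨ℓ, hℓ⟩ : ∃ ℓ, Tendsto u atTop (𝓝 ℓ) := by
    obtain ⟨N, hN⟩ := eventually_atTop.1 h
    obtain ⟨ℓ, hℓ⟩ := exists_tendsto_of_le_add_of_summable (u := fun k => u (k + N))
      (fun k => mul_nonneg hb (mul_nonneg (ht _) (hu _)))
      ((summable_nat_add_iff N).2 (hsum.mul_left b)) (fun k => hu _)
      fun k => by simpa [Nat.add_right_comm] using hN (k + N) (Nat.le_add_left N k)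
    exact ⟨ℓ, (tendsto_add_atTop_iff_nat N).1 hℓ⟩
  obtain rfl : ℓ = 0 := by
    refine le_antisymm (le_of_not_gt fun hℓpos => htsum ?_) (ge_of_tendsto' hℓ hu)
    -- once `u ≥ ℓ / 2`, the series `∑ t` is dominated by `(2 / ℓ) ∑ t u`
    refine (hsum.div_const (ℓ / 2)).of_norm_bounded_eventually_nat ?_
    filter_upwards [hℓ.eventually_const_le (half_lt_self hℓpos)] with k hk
    rw [Real.norm_of_nonneg (ht k), le_div_iff₀ (half_pos hℓpos)]
    exact mul_le_mul_of_nonneg_left hk (ht k)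
  exact hℓ

end Sequences

section Gradient

variable {E : Type*} [NormedAddCommGroup E] [InnerProductSpace ℝ E] [CompleteSpace E]
  {f : E → ℝ} {K : NNReal}

theorem abs_sub_sub_inner_gradient_le (hf : Differentiable ℝ f)
    (hK : LipschitzWith K (gradient f)) (x y : E) :
    |f y - f x - ⟪gradient f x, y - x⟫| ≤ K * ‖y - x‖ ^ 2 := by
  have hderiv : ∀ p, HasFDerivAt (fun p => f p - ⟪gradient f x, p⟫)
      (toDual ℝ E (gradient f p - gradient f x)) p := fun p => by
    refine ((hf p).hasFDerivAt.sub (innerSL ℝ (gradient f x)).hasFDerivAt).congr_fderiv ?_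
    ext v
    simp [gradient]
  have hbound : ∀ p ∈ segment ℝ x y,
      ‖toDual ℝ E (gradient f p - gradient f x)‖ ≤ K * ‖y - x‖ := fun p hp => by
    rw [LinearIsometryEquiv.norm_map]
    exact (hK.norm_sub_le p x).trans (by gcongr; exact norm_sub_le_of_mem_segment hp)
  have := (convex_segment x y).norm_image_sub_le_of_norm_hasFDerivWithin_le
    (fun p _ => (hderiv p).hasFDerivWithinAt) hbound (left_mem_segment ℝ x y)
    (right_mem_segment ℝ x y)
  have hrw : f y - f x - ⟪gradient f x, y - x⟫
      = (f y - ⟪gradient f x, y⟫) - (f x - ⟪gradient f x, x⟫) := by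
    rw [inner_sub_right]; ring
  rwa [hrw, sq, ← mul_assoc, ← Real.norm_eq_abs]

theorem apply_add_smul_le_of_descent_direction (hf : Differentiable ℝ f)
    (hK : LipschitzWith K (gradient f)) {x s : E} {t c₁ c₂ : ℝ} (ht : 0 ≤ t)
    (h₁ : c₁ * ‖gradient f x‖ ^ 2 ≤ -⟪gradient f x, s⟫) (h₂ : ‖s‖ ≤ c₂ * ‖gradient f x‖) :
    f (x + t • s) ≤ f x - t * (c₁ - K * c₂ ^ 2 * t) * ‖gradient f x‖ ^ 2 := by
  have hdesc := (abs_le.1 (abs_sub_sub_inner_gradient_le hf hK x (x + t • s))).2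
  have hs : ‖s‖ ^ 2 ≤ c₂ ^ 2 * ‖gradient f x‖ ^ 2 := by
    rw [← mul_pow]; exact pow_le_pow_left₀ (norm_nonneg s) h₂ 2
  rw [add_sub_cancel_left, inner_smul_right, norm_smul, Real.norm_of_nonneg ht] at hdesc
  nlinarith [mul_le_mul_of_nonneg_left hs (mul_nonneg K.coe_nonneg (sq_nonneg t)),
    mul_le_mul_of_nonneg_left h₁ ht]

theorem norm_gradient_add_smul_le (hK : LipschitzWith K (gradient f)) {x s : E} {t c₂ : ℝ}
    (ht : 0 ≤ t) (h₂ : ‖s‖ ≤ c₂ * ‖gradient f x‖) :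
    ‖gradient f (x + t • s)‖ ≤ (1 + K * c₂ * t) * ‖gradient f x‖ := by
  have hstep : ‖gradient f (x + t • s) - gradient f x‖ ≤ K * (t * ‖s‖) := by
    simpa [norm_smul, Real.norm_of_nonneg ht] using hK.norm_sub_le (x + t • s) x
  have := norm_le_norm_add_norm_sub' (gradient f (x + t • s)) (gradient f x)
  nlinarith [mul_le_mul_of_nonneg_left h₂ (mul_nonneg K.coe_nonneg ht)]

theorem tendsto_gradient_zero_of_diminishing_steps (hf : Differentiable ℝ f)
    (hK : LipschitzWith K (gradient f)) {z s : ℕ → E} {t : ℕ → ℝ} {Finf c₁ c₂ : ℝ}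
    (hlow : ∀ k, Finf ≤ f (z k)) (ht : ∀ k, 0 ≤ t k) (hiter : ∀ k, z (k + 1) = z k + t k • s k)
    (hc₁ : 0 < c₁) (hc₂ : 0 ≤ c₂)
    (h₁ : ∀ k, c₁ * ‖gradient f (z k)‖ ^ 2 ≤ -⟪gradient f (z k), s k⟫)
    (h₂ : ∀ k, ‖s k‖ ≤ c₂ * ‖gradient f (z k)‖)
    (htzero : Tendsto t atTop (𝓝 0)) (htsum : ¬Summable t) :
    Tendsto (fun k => gradient f (z k)) atTop (𝓝 0) := by
  set u : ℕ → ℝ := fun k => ‖gradient f (z k)‖ ^ 2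
  have hu : ∀ k, 0 ≤ u k := fun k => sq_nonneg _
  have hsmall : ∀ᶠ k in atTop, K * c₂ ^ 2 * t k ≤ c₁ / 2 ∧ K * c₂ * t k ≤ 1 := by
    have h1 : Tendsto (fun k => K * c₂ ^ 2 * t k) atTop (𝓝 0) := by
      simpa using htzero.const_mul (K * c₂ ^ 2)
    have h2 : Tendsto (fun k => K * c₂ * t k) atTop (𝓝 0) := by
      simpa using htzero.const_mul (K * c₂)
    exact (h1.eventually_le_const (half_pos hc₁)).and (h2.eventually_le_const one_pos)
  have hsum : Summable fun k => t k * u k := by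
    refine (summable_mul_left_iff (half_pos hc₁).ne').1 <|
      summable_of_eventually_le_sub
        (fun k => mul_nonneg (half_pos hc₁).le (mul_nonneg (ht k) (hu k))) hlow
        (hsmall.mono fun k hk => ?_)
    have hdesc := apply_add_smul_le_of_descent_direction hf hK (ht k) (h₁ k) (h₂ k)
    rw [← hiter] at hdesc
    nlinarith [mul_le_mul_of_nonneg_right hk.1 (mul_nonneg (ht k) (hu k))]
  have hgrowth : ∀ᶠ k in atTop, u (k + 1) ≤ u k + 3 * K * c₂ * (t k * u k) :=
    hsmall.mono fun k hk => by
      have hstep := norm_gradient_add_smul_le hK (ht k) (h₂ k)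
      rw [← hiter] at hstep
      have hx : 0 ≤ K * c₂ * t k := by have := ht k; positivity
      calc u (k + 1) ≤ ((1 + K * c₂ * t k) * ‖gradient f (z k)‖) ^ 2 :=
            pow_le_pow_left₀ (norm_nonneg _) hstep 2
        _ = (1 + K * c₂ * t k) ^ 2 * u k := mul_pow _ _ 2
        _ ≤ (1 + 3 * (K * c₂ * t k)) * u k := by gcongr; nlinarith
        _ = u k + 3 * K * c₂ * (t k * u k) := by ring
  have hu0 := tendsto_zero_of_summable_mul_of_le_add hu ht htsum (by positivity) hsum hgrowth
  exact tendsto_zero_iff_norm_tendsto_zero.2 (by simpa [u] using hu0.sqrt)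

end Gradient

theorem stmt13 {m : ℕ} (F : EuclideanSpace ℝ (Fin m) → ℝ) (L : ℝ)
    (hF : ContDiff ℝ 1 F)
    (hL : ∀ x y, ‖gradient F x - gradient F y‖ ≤ L * ‖x - y‖)
    (Finf : ℝ) (z s : ℕ → EuclideanSpace ℝ (Fin m)) (t : ℕ → ℝ)
    (hlow : ∀ k, Finf ≤ F (z k))
    (ht : ∀ k, 0 < t k)
    (hiter : ∀ k, z (k + 1) = z k + t k • s k)
    (c₁ c₂ : ℝ) (hc₁ : 0 < c₁) (hc₂ : 0 < c₂)
    (h₁ : ∀ k, c₁ * ‖gradient F (z k)‖ ^ 2 ≤ -⟪gradient F (z k), s k⟫)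
    (h₂ : ∀ k, ‖s k‖ ≤ c₂ * ‖gradient F (z k)‖)
    (htzero : Tendsto t atTop (nhds 0))
    (htsum : Tendsto (fun K => ∑ k ∈ Finset.range K, t k) atTop atTop) :
    Tendsto (fun k => gradient F (z k)) atTop (nhds 0) ∧
      ∀ zstar : EuclideanSpace ℝ (Fin m),
        (∃ φ : ℕ → ℕ, StrictMono φ ∧ Tendsto (z ∘ φ) atTop (nhds zstar)) →
        gradient F zstar = 0 := by
  have hK : LipschitzWith L.toNNReal (gradient F) :=
    LipschitzWith.of_dist_le' fun x y => by simpa only [dist_eq_norm] using hL x y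
  have ht' : ∀ k, 0 ≤ t k := fun k => (ht k).le
  have hgrad := tendsto_gradient_zero_of_diminishing_steps (hF.differentiable one_ne_zero) hK
    hlow ht' hiter hc₁ hc₂.le h₁ h₂ htzero
    ((not_summable_iff_tendsto_nat_atTop_of_nonneg ht').2 htsum)
  refine ⟨hgrad, fun zstar ⟨φ, hφ, hz⟩ => ?_⟩
  exact tendsto_nhds_unique ((hK.continuous.tendsto zstar).comp hz)
    (hgrad.comp hφ.tendsto_atTop)
end

section
/- Let F̃ : ℝ^m → ℝ be continuously differentiable with L-Lipschitz gradient and F̃(z_k) ≥ F̃_inf for all k, where (z_k) is generated by z_{k+1} = z_k + t_k s_k. Suppose the inexact direction conditions hold: c₁'‖∇̄F̃(z_k)‖₂² ≤ −⟨∇̄F̃(z_k), s_k⟩ and ‖s_k‖₂ ≤ c₂'‖∇̄F̃(z_k)‖₂ with c₁', c₂' > 0, together with the directional error tolerance ‖∇̄F̃(z_k) − ∇F̃(z_k)‖₂ ≤ ζ‖∇̄F̃(z_k)‖₂ for ζ ∈ [0, c₁'/c₂'). Set c₁ = (c₁' − ζc₂')/(1+ζ)² and c₂ = c₂'/(1−ζ),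 and suppose the step sizes satisfy t_k ∈ [t̄, (2c₁ − γ)/(c₂²L)] for all k, where t̄ > 0 and γ > 0 with t̄ ≤ (2c₁ − γ)/(c₂²L). Then both ∇F̃(z_k) → 0 and ∇̄F̃(z_k) → 0 as k → ∞, and every limit point of (z_k) is a stationary point of F̃. -/
open Filter
open scoped RealInnerProductSpace Topology

/-! Because `‖ḡ - ∇F(z)‖ ≤ ζ‖ḡ‖`, the direction `s` is still a descent direction for the true
gradient: `⟪∇F(z), s⟫ ≤ -(c₁' - ζ c₂')‖ḡ‖²`. Feeding this into the descent lemma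
`F(x + v) ≤ F(x) + ⟪∇F(x), v⟫ + L/2 ‖v‖²`, the step-size window gives a sufficient decrease
`F(z_k) - F(z_{k+1}) ≥ t̄ (γ/2) (1 - ζ)² ‖ḡ_k‖²`. As `F(z_k)` is bounded below, `∑ ‖ḡ_k‖² < ∞`,
so `ḡ_k → 0`, and then `∇F(z_k) → 0` since `‖∇F(z_k)‖ ≤ (1 + ζ)‖ḡ_k‖`. Continuity of `∇F`
makes every limit point stationary. -/

section InnerProductSpace

variable {E : Type*} [NormedAddCommGroup E] [InnerProductSpace ℝ E]

theorem inner_le_of_norm_sub_le {G g s : E} {c₁' c₂' ζ : ℝ}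
    (h₁ : c₁' * ‖g‖ ^ 2 ≤ -⟪g, s⟫) (h₂ : ‖s‖ ≤ c₂' * ‖g‖) (herr : ‖g - G‖ ≤ ζ * ‖g‖) :
    ⟪G, s⟫ ≤ -(c₁' - ζ * c₂') * ‖g‖ ^ 2 := by
  have herr_s : -⟪g - G, s⟫ ≤ ζ * ‖g‖ * (c₂' * ‖g‖) :=
    calc -⟪g - G, s⟫ ≤ ‖g - G‖ * ‖s‖ := (neg_le_abs _).trans (abs_real_inner_le_norm _ _)
      _ ≤ ζ * ‖g‖ * (c₂' * ‖g‖) :=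
        mul_le_mul herr h₂ (norm_nonneg _) ((norm_nonneg _).trans herr)
  calc ⟪G, s⟫ = ⟪g, s⟫ - ⟪g - G, s⟫ := by rw [inner_sub_left]; ring
    _ ≤ -(c₁' - ζ * c₂') * ‖g‖ ^ 2 := by linear_combination h₁ + herr_s

variable [CompleteSpace E] {F : E → ℝ}

theorem ContDiff.continuous_gradient (hF : ContDiff ℝ 1 F) : Continuous (gradient F) :=
  (InnerProductSpace.toDual ℝ E).symm.continuous.comp (hF.continuous_fderiv one_ne_zero)

theorem hasDerivAt_apply_add_smul (hF : Differentiable ℝ F) (x v : E) (τ : ℝ) :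
    HasDerivAt (fun τ : ℝ => F (x + τ • v)) ⟪gradient F (x + τ • v), v⟫ τ := by
  have hline : HasDerivAt (fun τ : ℝ => x + τ • v) v τ := by
    simpa using ((hasDerivAt_id τ).smul_const v).const_add x
  have := (hF (x + τ • v)).hasFDerivAt.comp_hasDerivAt τ hline
  rwa [← toDual_gradient, InnerProductSpace.toDual_apply_apply] at this

theorem apply_add_le_of_lipschitz_gradient {L : ℝ} (hF : Differentiable ℝ F)
    (hL : ∀ x y, ‖gradient F x - gradient F y‖ ≤ L * ‖x - y‖) (x v : E) :
    F (x + v) ≤ F x + ⟪gradient F x, v⟫ + L / 2 * ‖v‖ ^ 2 := by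
  set φ : ℝ → ℝ := fun τ => F (x + τ • v) - τ * ⟪gradient F x, v⟫ - L / 2 * τ ^ 2 * ‖v‖ ^ 2
  have hφ : ∀ τ, HasDerivAt φ
      (⟪gradient F (x + τ • v), v⟫ - ⟪gradient F x, v⟫ - L / 2 * (2 * τ) * ‖v‖ ^ 2) τ := by
    intro τ
    have := ((hasDerivAt_apply_add_smul hF x v τ).sub
      ((hasDerivAt_id' τ).mul_const ⟪gradient F x, v⟫)).sub
      (((hasDerivAt_pow 2 τ).const_mul (L / 2)).mul_const (‖v‖ ^ 2))
    exact this.congr_deriv (by norm_num)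
  have hφ_nonpos : ∀ τ ∈ interior (Set.Ici (0 : ℝ)),
      ⟪gradient F (x + τ • v), v⟫ - ⟪gradient F x, v⟫ - L / 2 * (2 * τ) * ‖v‖ ^ 2 ≤ 0 := by
    intro τ hτ
    rw [interior_Ici, Set.mem_Ioi] at hτ
    have hgrad : ‖gradient F (x + τ • v) - gradient F x‖ ≤ L * (τ * ‖v‖) := by
      simpa [norm_smul, abs_of_pos hτ] using hL (x + τ • v) x
    rw [sub_nonpos]
    calc ⟪gradient F (x + τ • v), v⟫ - ⟪gradient F x, v⟫
        = ⟪gradient F (x + τ • v) - gradient F x, v⟫ := (inner_sub_left _ _ _).symm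
      _ ≤ ‖gradient F (x + τ • v) - gradient F x‖ * ‖v‖ := real_inner_le_norm _ _
      _ ≤ L * (τ * ‖v‖) * ‖v‖ := by gcongr
      _ = L / 2 * (2 * τ) * ‖v‖ ^ 2 := by ring
  have hanti : AntitoneOn φ (Set.Ici 0) :=
    antitoneOn_of_hasDerivWithinAt_nonpos (convex_Ici 0)
      (fun τ _ => (hφ τ).continuousAt.continuousWithinAt)
      (fun τ _ => (hφ τ).hasDerivWithinAt) hφ_nonpos
  have := hanti Set.self_mem_Ici (Set.mem_Ici.mpr zero_le_one) zero_le_one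
  simp only [φ, zero_smul, add_zero, one_smul, zero_mul, one_pow, mul_one, sub_zero] at this
  linarith

theorem apply_add_smul_le_of_inexact_direction {L : ℝ} (hF : Differentiable ℝ F)
    (hL : ∀ x y, ‖gradient F x - gradient F y‖ ≤ L * ‖x - y‖) (hL0 : 0 ≤ L)
    {x s g : E} {t c₁' c₂' ζ : ℝ} (ht : 0 ≤ t)
    (h₁ : c₁' * ‖g‖ ^ 2 ≤ -⟪g, s⟫) (h₂ : ‖s‖ ≤ c₂' * ‖g‖)
    (herr : ‖g - gradient F x‖ ≤ ζ * ‖g‖) :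
    F (x + t • s) ≤ F x - t * (c₁' - ζ * c₂' - L / 2 * t * c₂' ^ 2) * ‖g‖ ^ 2 := by
  have hs : ‖s‖ ^ 2 ≤ (c₂' * ‖g‖) ^ 2 := pow_le_pow_left₀ (norm_nonneg _) h₂ 2
  calc F (x + t • s) ≤ F x + ⟪gradient F x, t • s⟫ + L / 2 * ‖t • s‖ ^ 2 :=
        apply_add_le_of_lipschitz_gradient hF hL x (t • s)
    _ = F x + t * ⟪gradient F x, s⟫ + L / 2 * t ^ 2 * ‖s‖ ^ 2 := by
        rw [inner_smul_right, norm_smul, Real.norm_of_nonneg ht]; ring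
    _ ≤ F x + t * (-(c₁' - ζ * c₂') * ‖g‖ ^ 2) + L / 2 * t ^ 2 * (c₂' * ‖g‖) ^ 2 := by
        gcongr
        exact inner_le_of_norm_sub_le h₁ h₂ herr
    _ = F x - t * (c₁' - ζ * c₂' - L / 2 * t * c₂' ^ 2) * ‖g‖ ^ 2 := by ring

end InnerProductSpace

theorem lipschitz_const_nonneg {E G : Type*} [NormedAddCommGroup E] [Nontrivial E]
    [SeminormedAddCommGroup G] {f : E → G} {L : ℝ} (hL : ∀ x y, ‖f x - f y‖ ≤ L * ‖x - y‖) :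
    0 ≤ L := by
  obtain ⟨x, hx⟩ := exists_ne (0 : E)
  have := (norm_nonneg _).trans (hL x 0)
  rw [sub_zero] at this
  exact nonneg_of_mul_nonneg_left this (norm_pos_iff.mpr hx)

theorem le_step_mul_decrease_coeff {L c₁ c₂ c₁' c₂' ζ γ tbar t : ℝ} (hζ : 0 ≤ ζ)
    (hζ1 : 1 - ζ ≠ 0) (hL : 0 ≤ L) (hγ : 0 ≤ γ) (htbar : 0 ≤ tbar)
    (hc₁ : c₁ = (c₁' - ζ * c₂') / (1 + ζ) ^ 2) (hc₂ : c₂ = c₂' / (1 - ζ))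
    (hden : 0 < c₂ ^ 2 * L) (ht : t ∈ Set.Icc tbar ((2 * c₁ - γ) / (c₂ ^ 2 * L))) :
    tbar * (γ / 2 * (1 - ζ) ^ 2) ≤ t * (c₁' - ζ * c₂' - L / 2 * t * c₂' ^ 2) := by
  have hc₁' : c₁' - ζ * c₂' = c₁ * (1 + ζ) ^ 2 := by
    rw [hc₁, div_mul_cancel₀ _ (by positivity)]
  have hc₂' : c₂' ^ 2 = c₂ ^ 2 * (1 - ζ) ^ 2 := by
    rw [hc₂, div_pow, div_mul_cancel₀ _ (pow_ne_zero 2 hζ1)]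
  have ht0 : 0 ≤ t := htbar.trans ht.1
  have hLt : L * t * c₂ ^ 2 ≤ 2 * c₁ - γ := by
    have := (le_div_iff₀ hden).mp ht.2
    linarith
  have hc₁0 : 0 ≤ c₁ := by linarith [mul_nonneg (mul_nonneg hL ht0) (sq_nonneg c₂)]
  have hsq : (1 - ζ) ^ 2 ≤ (1 + ζ) ^ 2 := by nlinarith
  have hcoeff : γ / 2 * (1 - ζ) ^ 2 ≤ c₁' - ζ * c₂' - L / 2 * t * c₂' ^ 2 := by
    rw [hc₁', hc₂']
    nlinarith [mul_le_mul_of_nonneg_left hsq hc₁0,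
      mul_le_mul_of_nonneg_right hLt (sq_nonneg (1 - ζ))]
  calc tbar * (γ / 2 * (1 - ζ) ^ 2) ≤ tbar * (c₁' - ζ * c₂' - L / 2 * t * c₂' ^ 2) :=
        mul_le_mul_of_nonneg_left hcoeff htbar
    _ ≤ t * (c₁' - ζ * c₂' - L / 2 * t * c₂' ^ 2) :=
        mul_le_mul_of_nonneg_right ht.1
          ((by positivity : (0 : ℝ) ≤ γ / 2 * (1 - ζ) ^ 2).trans hcoeff)

theorem tendsto_zero_of_mul_sq_norm_le_sub {E : Type*} [SeminormedAddCommGroup E]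
    {f : ℕ → ℝ} {g : ℕ → E} {δ c : ℝ} (hδ : 0 < δ) (hlow : ∀ k, c ≤ f k)
    (hdec : ∀ k, δ * ‖g k‖ ^ 2 ≤ f k - f (k + 1)) : Tendsto g atTop (𝓝 0) := by
  have hsum : Summable fun k => ‖g k‖ ^ 2 := by
    refine summable_of_sum_range_le (c := (f 0 - c) / δ) (fun _ => sq_nonneg _) fun n => ?_
    rw [le_div_iff₀' hδ, Finset.mul_sum]
    calc ∑ k ∈ Finset.range n, δ * ‖g k‖ ^ 2 ≤ ∑ k ∈ Finset.range n, (f k - f (k + 1)) :=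
          Finset.sum_le_sum fun k _ => hdec k
      _ = f 0 - f n := Finset.sum_range_sub' f n
      _ ≤ f 0 - c := by linarith [hlow n]
  rw [tendsto_zero_iff_norm_tendsto_zero]
  simpa [Function.comp_def, Real.sqrt_sq (norm_nonneg _)] using
    (Real.continuous_sqrt.tendsto 0).comp hsum.tendsto_atTop_zero

theorem tendsto_zero_of_norm_sub_le {ι E : Type*} [SeminormedAddCommGroup E] {l : Filter ι}
    {g G : ι → E} {ζ : ℝ} (hg : Tendsto g l (𝓝 0)) (h : ∀ k, ‖g k - G k‖ ≤ ζ * ‖g k‖) :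
    Tendsto G l (𝓝 0) := by
  refine squeeze_zero_norm (a := fun k => (1 + ζ) * ‖g k‖) (fun k => ?_) ?_
  · calc ‖G k‖ = ‖g k - (g k - G k)‖ := by rw [sub_sub_cancel]
      _ ≤ ‖g k‖ + ‖g k - G k‖ := norm_sub_le _ _
      _ ≤ (1 + ζ) * ‖g k‖ := by linarith [h k]
  · simpa using (tendsto_norm_zero.comp hg).const_mul (1 + ζ)

theorem stmt18_general {m : ℕ} (F : EuclideanSpace ℝ (Fin m) → ℝ) (L : ℝ)
    (hF : ContDiff ℝ 1 F)
    (hL : ∀ x y, ‖gradient F x - gradient F y‖ ≤ L * ‖x - y‖)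
    (Finf : ℝ) (z s gbar : ℕ → EuclideanSpace ℝ (Fin m)) (t : ℕ → ℝ)
    (hlow : ∀ k, Finf ≤ F (z k))
    (hiter : ∀ k, z (k + 1) = z k + t k • s k)
    (c₁' c₂' ζ : ℝ)
    (hζ : 0 ≤ ζ)
    (h₁ : ∀ k, c₁' * ‖gbar k‖ ^ 2 ≤ -⟪gbar k, s k⟫)
    (h₂ : ∀ k, ‖s k‖ ≤ c₂' * ‖gbar k‖)
    (herr : ∀ k, ‖gbar k - gradient F (z k)‖ ≤ ζ * ‖gbar k‖)
    (c₁ c₂ : ℝ) (hc₁ : c₁ = (c₁' - ζ * c₂') / (1 + ζ) ^ 2)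
    (hc₂ : c₂ = c₂' / (1 - ζ))
    (tbar γ : ℝ) (htbar : 0 < tbar) (hγ : 0 < γ)
    (hstep : ∀ k, t k ∈ Set.Icc tbar ((2 * c₁ - γ) / (c₂ ^ 2 * L))) :
    Tendsto (fun k => gradient F (z k)) atTop (nhds 0) ∧
      Tendsto gbar atTop (nhds 0) ∧
      ∀ zstar : EuclideanSpace ℝ (Fin m),
        (∃ φ : ℕ → ℕ, StrictMono φ ∧ Tendsto (z ∘ φ) atTop (nhds zstar)) →
        gradient F zstar = 0 := by
  -- on the zero space the Lipschitz bound holds for every `L`, also a negative one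
  rcases subsingleton_or_nontrivial (EuclideanSpace ℝ (Fin m)) with hE | hE
  · exact ⟨tendsto_const_nhds.congr fun _ => Subsingleton.elim _ _,
      tendsto_const_nhds.congr fun _ => Subsingleton.elim _ _, fun _ _ => Subsingleton.elim _ _⟩
  have hL0 : 0 ≤ L := lipschitz_const_nonneg hL
  have hden : 0 < c₂ ^ 2 * L := by
    have hpos := htbar.trans_le ((hstep 0).1.trans (hstep 0).2)
    exact (div_pos_iff.mp hpos).elim (·.2)
      fun h => absurd h.2 (mul_nonneg (sq_nonneg _) hL0).not_gt
  have hζ1 : 1 - ζ ≠ 0 := fun h => by simp [hc₂, h] at hden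
  set δ := tbar * (γ / 2 * (1 - ζ) ^ 2)
  have hδ : 0 < δ := by positivity
  have hdec : ∀ k, δ * ‖gbar k‖ ^ 2 ≤ F (z k) - F (z (k + 1)) := by
    intro k
    have hstep_dec := apply_add_smul_le_of_inexact_direction (hF.differentiable one_ne_zero) hL
      hL0 (htbar.le.trans (hstep k).1) (h₁ k) (h₂ k) (herr k)
    have hcoeff : δ * ‖gbar k‖ ^ 2 ≤ _ := mul_le_mul_of_nonneg_right
      (le_step_mul_decrease_coeff hζ hζ1 hL0 hγ.le htbar.le hc₁ hc₂ hden (hstep k))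
      (sq_nonneg ‖gbar k‖)
    rw [← hiter k] at hstep_dec
    linarith
  have hgbar := tendsto_zero_of_mul_sq_norm_le_sub hδ hlow hdec
  have hgrad := tendsto_zero_of_norm_sub_le hgbar herr
  refine ⟨hgrad, hgbar, fun zstar ⟨φ, hφ, hzφ⟩ => ?_⟩
  exact tendsto_nhds_unique ((hF.continuous_gradient.tendsto zstar).comp hzφ)
    (hgrad.comp hφ.tendsto_atTop)

theorem stmt18 {m : ℕ} (F : EuclideanSpace ℝ (Fin m) → ℝ) (L : ℝ)
    (hF : ContDiff ℝ 1 F)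
    (hL : ∀ x y, ‖gradient F x - gradient F y‖ ≤ L * ‖x - y‖)
    (Finf : ℝ) (z s gbar : ℕ → EuclideanSpace ℝ (Fin m)) (t : ℕ → ℝ)
    (hlow : ∀ k, Finf ≤ F (z k))
    (hiter : ∀ k, z (k + 1) = z k + t k • s k)
    (c₁' c₂' ζ : ℝ) (hc₁' : 0 < c₁') (hc₂' : 0 < c₂')
    (hζ : 0 ≤ ζ) (hζlt : ζ < c₁' / c₂')
    (h₁ : ∀ k, c₁' * ‖gbar k‖ ^ 2 ≤ -⟪gbar k, s k⟫)
    (h₂ : ∀ k, ‖s k‖ ≤ c₂' * ‖gbar k‖)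
    (herr : ∀ k, ‖gbar k - gradient F (z k)‖ ≤ ζ * ‖gbar k‖)
    (c₁ c₂ : ℝ) (hc₁ : c₁ = (c₁' - ζ * c₂') / (1 + ζ) ^ 2)
    (hc₂ : c₂ = c₂' / (1 - ζ))
    (tbar γ : ℝ) (htbar : 0 < tbar) (hγ : 0 < γ)
    (htle : tbar ≤ (2 * c₁ - γ) / (c₂ ^ 2 * L))
    (hstep : ∀ k, t k ∈ Set.Icc tbar ((2 * c₁ - γ) / (c₂ ^ 2 * L))) :
    Tendsto (fun k => gradient F (z k)) atTop (nhds 0) ∧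
      Tendsto gbar atTop (nhds 0) ∧
      ∀ zstar : EuclideanSpace ℝ (Fin m),
        (∃ φ : ℕ → ℕ, StrictMono φ ∧ Tendsto (z ∘ φ) atTop (nhds zstar)) →
        gradient F zstar = 0 :=
  stmt18_general F L hF hL Finf z s gbar t hlow hiter c₁' c₂' ζ hζ h₁ h₂ herr c₁ c₂ hc₁ hc₂ tbar γ
    htbar hγ hstep
end
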